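/- arXiv:1802.08403 — 5 statements merged into one kernel-verified Lean document; each statement's English description precedes it below -/
import Mathlib

section
/- Let p > 1, a ≥ 1, q real with (p-1)a > q-2. If f ∈ C²([0,T)) satisfies f(t) ≥ δ(t+R)^a and f''(t) ≥ m(t+R)^{-q} f(t)^p for all t ∈ [0,T), where δ, R, m > 0, then T is finite; i.e., f cannot exist globally on [0,∞). -/
/-!
After the shift `t ↦ t + R` everything happens near `+∞`. Integrating `f'' ≥ m t^(-q) f^p` twice
turns a bound `f ≥ C t^A` into `f ≥ C' t^(pA - q + 2)`, and `pA - q + 2 ≥ A + ((p-1)a - (q-2))`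
for `A ≥ a`, so `f` eventually dominates every power of `t`. Then `t^(-q) f^((p-1)/2)` is bounded
below and `f'' ≥ c f^r` with `r = (p+1)/2 > 1`. The energy `f'^2 - 2c/(r+1) f^(r+1)` is
nondecreasing, which gives `f' ≥ c' f^β` with `β = (r+1)/2 > 1`; finally `f^(1-β)` decreases at a
linear rate and would become negative.
-/

open Real Filter Set

theorem eventually_half_le_of_deriv_le {u v u' v' : ℝ → ℝ}
    (hu : ∀ᶠ t in atTop, HasDerivAt u (u' t) t) (hv : ∀ᶠ t in atTop, HasDerivAt v (v' t) t)
    (huv : ∀ᶠ t in atTop, v' t ≤ u' t) (hv_top : Tendsto v atTop atTop) :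
    ∀ᶠ t in atTop, v t / 2 ≤ u t := by
  obtain ⟨T, hT⟩ := eventually_atTop.1 ((hu.and hv).and huv)
  have hderiv : ∀ t ∈ Ici T, HasDerivAt (u - v) (u' t - v' t) t :=
    fun t ht => (hT t ht).1.1.sub (hT t ht).1.2
  have hmono : MonotoneOn (u - v) (Ici T) := by
    refine monotoneOn_of_hasDerivWithinAt_nonneg (f' := u' - v') (convex_Ici T)
      (fun t ht => (hderiv t ht).continuousAt.continuousWithinAt) (fun t ht => ?_) (fun t ht => ?_)
    · exact (hderiv t (interior_subset ht)).hasDerivWithinAt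
    · exact sub_nonneg.2 (hT t (interior_subset ht)).2
  filter_upwards [hv_top.eventually_ge_atTop (2 * (v T - u T)), eventually_ge_atTop T]
    with t hvt hTt
  have := hmono self_mem_Ici hTt hTt
  simp only [Pi.sub_apply] at this
  linarith

theorem false_of_deriv_ge_rpow {u u' : ℝ → ℝ} {c β : ℝ} (hc : 0 < c) (hβ : 1 < β)
    (hu : ∀ᶠ t in atTop, HasDerivAt u (u' t) t) (hpos : ∀ᶠ t in atTop, 0 < u t)
    (hineq : ∀ᶠ t in atTop, c * u t ^ β ≤ u' t) : False := by
  set k := (β - 1) * c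
  have hk : 0 < k := mul_pos (by linarith) hc
  have hφ : ∀ᶠ t in atTop,
      HasDerivAt (fun t => -u t ^ (1 - β)) (-(u' t * (1 - β) * u t ^ (1 - β - 1))) t := by
    filter_upwards [hu, hpos] with t hut hut_pos
    exact (hut.rpow_const (Or.inl hut_pos.ne')).neg
  have hφ' : ∀ᶠ t in atTop, k ≤ -(u' t * (1 - β) * u t ^ (1 - β - 1)) := by
    filter_upwards [hpos, hineq] with t hut hineq
    have hcancel : u t ^ β * u t ^ (1 - β - 1) = 1 := by
      rw [← rpow_add hut, show β + (1 - β - 1) = 0 by ring, rpow_zero]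
    have := mul_le_mul_of_nonneg_right hineq (rpow_pos_of_pos hut (1 - β - 1)).le
    rw [mul_assoc, hcancel] at this
    nlinarith
  have hlin : ∀ᶠ t in atTop, HasDerivAt (fun t => k * t) k t :=
    Eventually.of_forall fun t => by simpa using (hasDerivAt_id t).const_mul k
  have := eventually_half_le_of_deriv_le hφ hlin hφ' (tendsto_id.const_mul_atTop hk)
  obtain ⟨t, ht, htpos, hut⟩ := (this.and ((eventually_gt_atTop 0).and hpos)).exists
  have : 0 < u t ^ (1 - β) := rpow_pos_of_pos hut _
  nlinarith

theorem false_of_deriv_deriv_ge_rpow {F F' F'' : ℝ → ℝ} {c r : ℝ} (hc : 0 < c) (hr : 1 < r)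
    (hF : ∀ᶠ t in atTop, HasDerivAt F (F' t) t) (hF' : ∀ᶠ t in atTop, HasDerivAt F' (F'' t) t)
    (hF'_nonneg : ∀ᶠ t in atTop, 0 ≤ F' t) (hF_top : Tendsto F atTop atTop)
    (hode : ∀ᶠ t in atTop, c * F t ^ r ≤ F'' t) : False := by
  have hr1 : 0 < r + 1 := by linarith
  have hK : 0 < 2 * c / (r + 1) := by positivity
  have hFpos := hF_top.eventually_gt_atTop 0
  have hsq : ∀ᶠ t in atTop, HasDerivAt (fun t => F' t ^ 2) (2 * F' t * F'' t) t := by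
    filter_upwards [hF'] with t ht
    simpa using ht.fun_pow 2
  have hpow : ∀ᶠ t in atTop,
      HasDerivAt (fun t => 2 * c / (r + 1) * F t ^ (r + 1)) (2 * F' t * (c * F t ^ r)) t := by
    filter_upwards [hF, hFpos] with t ht hpos
    refine ((ht.rpow_const (p := r + 1) (Or.inl hpos.ne')).const_mul _).congr_deriv ?_
    rw [add_sub_cancel_right]
    field_simp
  have hmono : ∀ᶠ t in atTop, 2 * F' t * (c * F t ^ r) ≤ 2 * F' t * F'' t := by
    filter_upwards [hode, hF'_nonneg] with t hode hnn
    gcongr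
  have henergy := eventually_half_le_of_deriv_le hsq hpow hmono
    (((tendsto_rpow_atTop hr1).comp hF_top).const_mul_atTop hK)
  refine false_of_deriv_ge_rpow (u := F) (c := √(c / (r + 1))) (β := (r + 1) / 2)
    (by positivity) (by linarith) hF hFpos ?_
  filter_upwards [henergy, hF'_nonneg, hFpos] with t ht hnn hpos
  have hroot : F t ^ ((r + 1) / 2) = √(F t ^ (r + 1)) := by
    rw [sqrt_eq_rpow, ← rpow_mul hpos.le, div_eq_mul_one_div]
  calc √(c / (r + 1)) * F t ^ ((r + 1) / 2) = √(c / (r + 1) * F t ^ (r + 1)) := by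
        rw [hroot, sqrt_mul (by positivity)]
    _ ≤ √(F' t ^ 2) := sqrt_le_sqrt ((le_of_eq (by ring)).trans ht)
    _ = F' t := sqrt_sq hnn

theorem exists_mul_rpow_le_of_deriv_ge {u u' : ℝ → ℝ} {c s : ℝ} (hc : 0 < c) (hs : -1 < s)
    (hu : ∀ᶠ t in atTop, HasDerivAt u (u' t) t) (h : ∀ᶠ t in atTop, c * t ^ s ≤ u' t) :
    ∃ C > 0, ∀ᶠ t in atTop, C * t ^ (s + 1) ≤ u t := by
  have hs1 : 0 < s + 1 := by linarith
  have hK : 0 < c / (s + 1) := div_pos hc hs1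
  have hv : ∀ᶠ t in atTop, HasDerivAt (fun t => c / (s + 1) * t ^ (s + 1)) (c * t ^ s) t := by
    filter_upwards [eventually_gt_atTop 0] with t ht
    have := (hasDerivAt_rpow_const (p := s + 1) (Or.inl ht.ne')).const_mul (c / (s + 1))
    rwa [add_sub_cancel_right, ← mul_assoc, div_mul_cancel₀ c hs1.ne'] at this
  refine ⟨c / (s + 1) / 2, div_pos hK two_pos, ?_⟩
  filter_upwards [eventually_half_le_of_deriv_le hu hv h
    ((tendsto_rpow_atTop hs1).const_mul_atTop hK)] with t ht
  linarith

theorem eventually_mul_rpow_le_of_exponent_le {F : ℝ → ℝ} {A B C : ℝ} (hAB : A ≤ B) (hC : 0 ≤ C)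
    (h : ∀ᶠ t in atTop, C * t ^ B ≤ F t) : ∀ᶠ t in atTop, C * t ^ A ≤ F t := by
  filter_upwards [h, eventually_ge_atTop 1] with t ht ht1
  exact (mul_le_mul_of_nonneg_left (rpow_le_rpow_of_exponent_le ht1 hAB) hC).trans ht

theorem mul_rpow_le_rpow_of_le {C t A x p : ℝ} (hC : 0 ≤ C) (ht : 0 ≤ t) (hp : 0 ≤ p)
    (h : C * t ^ A ≤ x) : C ^ p * t ^ (A * p) ≤ x ^ p := by
  rw [rpow_mul ht, ← mul_rpow hC (rpow_nonneg ht A)]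
  exact rpow_le_rpow (by positivity) h hp

section SuperlinearODE

variable {p q m : ℝ} {F F' F'' : ℝ → ℝ}

theorem eventually_mul_rpow_le_deriv_deriv (hp : 0 ≤ p) (hm : 0 < m)
    (hode : ∀ᶠ t in atTop, m * t ^ (-q) * F t ^ p ≤ F'' t) {A C : ℝ} (hC : 0 < C)
    (hlow : ∀ᶠ t in atTop, C * t ^ A ≤ F t) :
    ∀ᶠ t in atTop, m * C ^ p * t ^ (p * A - q) ≤ F'' t := by
  filter_upwards [hode, hlow, eventually_gt_atTop 0] with t hode hlow ht
  have hpow := mul_rpow_le_rpow_of_le hC.le ht.le hp hlow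
  calc m * C ^ p * t ^ (p * A - q) = m * t ^ (-q) * (C ^ p * t ^ (A * p)) := by
        rw [sub_eq_add_neg, rpow_add ht, mul_comm A]; ring
    _ ≤ m * t ^ (-q) * F t ^ p := by gcongr
    _ ≤ F'' t := hode

theorem exists_mul_rpow_add_two_le (hp : 0 ≤ p) (hm : 0 < m)
    (hF : ∀ᶠ t in atTop, HasDerivAt F (F' t) t) (hF' : ∀ᶠ t in atTop, HasDerivAt F' (F'' t) t)
    (hode : ∀ᶠ t in atTop, m * t ^ (-q) * F t ^ p ≤ F'' t) {A C : ℝ} (hC : 0 < C)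
    (hA : -1 < p * A - q) (hlow : ∀ᶠ t in atTop, C * t ^ A ≤ F t) :
    ∃ C' > 0, ∀ᶠ t in atTop, C' * t ^ (p * A - q + 2) ≤ F t := by
  obtain ⟨C₁, hC₁, h₁⟩ := exists_mul_rpow_le_of_deriv_ge (by positivity) hA hF'
    (eventually_mul_rpow_le_deriv_deriv hp hm hode hC hlow)
  obtain ⟨C₂, hC₂, h₂⟩ := exists_mul_rpow_le_of_deriv_ge hC₁ (by linarith) hF h₁
  exact ⟨C₂, hC₂, by simpa only [add_assoc, one_add_one_eq_two] using h₂⟩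

theorem exists_mul_rpow_le_of_deriv_deriv {a δ : ℝ} (hp : 1 < p) (ha : 1 ≤ a)
    (haq : (p - 1) * a > q - 2) (hδ : 0 < δ) (hm : 0 < m)
    (hF : ∀ᶠ t in atTop, HasDerivAt F (F' t) t) (hF' : ∀ᶠ t in atTop, HasDerivAt F' (F'' t) t)
    (hlow : ∀ᶠ t in atTop, δ * t ^ a ≤ F t)
    (hode : ∀ᶠ t in atTop, m * t ^ (-q) * F t ^ p ≤ F'' t) (B : ℝ) :
    ∃ C > 0, ∀ᶠ t in atTop, C * t ^ B ≤ F t := by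
  set ε := (p - 1) * a - (q - 2)
  have hε : 0 < ε := by linarith
  have hiter : ∀ n : ℕ, ∃ C > 0, ∀ᶠ t in atTop, C * t ^ (a + n * ε) ≤ F t := by
    intro n
    induction n with
    | zero => exact ⟨δ, hδ, by simpa using hlow⟩
    | succ n ih =>
      obtain ⟨C, hC, hCn⟩ := ih
      have hnε : 0 ≤ (n : ℝ) * ε := by positivity
      have hstep : (p - 1) * a ≤ (p - 1) * (a + n * ε) := by nlinarith
      obtain ⟨C', hC', hC'n⟩ := exists_mul_rpow_add_two_le (by linarith) hm hF hF' hode hC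
        (by nlinarith) hCn
      refine ⟨C', hC', eventually_mul_rpow_le_of_exponent_le ?_ hC'.le hC'n⟩
      push_cast
      nlinarith
  obtain ⟨n, hn⟩ := exists_nat_ge ((B - a) / ε)
  obtain ⟨C, hC, hCn⟩ := hiter n
  refine ⟨C, hC, eventually_mul_rpow_le_of_exponent_le ?_ hC.le hCn⟩
  rw [div_le_iff₀ hε] at hn
  linarith

theorem false_of_rpow_le_of_deriv_deriv_ge {a δ : ℝ} (hp : 1 < p) (ha : 1 ≤ a)
    (haq : (p - 1) * a > q - 2) (hδ : 0 < δ) (hm : 0 < m)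
    (hF : ∀ᶠ t in atTop, HasDerivAt F (F' t) t) (hF' : ∀ᶠ t in atTop, HasDerivAt F' (F'' t) t)
    (hlow : ∀ᶠ t in atTop, δ * t ^ a ≤ F t)
    (hode : ∀ᶠ t in atTop, m * t ^ (-q) * F t ^ p ≤ F'' t) : False := by
  have hp0 : 0 ≤ p := by linarith
  obtain ⟨C₁, hC₁, hF'_low⟩ := exists_mul_rpow_le_of_deriv_ge (by positivity) (by nlinarith) hF'
    (eventually_mul_rpow_le_deriv_deriv hp0 hm hode hδ hlow)
  have hF'_nonneg : ∀ᶠ t in atTop, 0 ≤ F' t := by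
    filter_upwards [hF'_low, eventually_gt_atTop 0] with t h ht
    exact (mul_nonneg hC₁.le (rpow_nonneg ht.le _)).trans h
  have hF_top : Tendsto F atTop atTop :=
    tendsto_atTop_mono' _ hlow ((tendsto_rpow_atTop (by linarith)).const_mul_atTop hδ)
  obtain ⟨C, hC, hCq⟩ :=
    exists_mul_rpow_le_of_deriv_deriv hp ha haq hδ hm hF hF' hlow hode (2 * q / (p - 1))
  refine false_of_deriv_deriv_ge_rpow (c := m * C ^ ((p - 1) / 2)) (r := (p + 1) / 2)
    (by positivity) (by linarith) hF hF' hF'_nonneg hF_top ?_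
  filter_upwards [hode, hCq, eventually_gt_atTop 0, hF_top.eventually_gt_atTop 0]
    with t hode hCq ht hFt
  have hq : 2 * q / (p - 1) * ((p - 1) / 2) = q := by
    field_simp [(by linarith : p - 1 ≠ 0)]
  have hroot := mul_rpow_le_rpow_of_le hC.le ht.le (by linarith : 0 ≤ (p - 1) / 2) hCq
  rw [hq] at hroot
  calc m * C ^ ((p - 1) / 2) * F t ^ ((p + 1) / 2)
      = m * t ^ (-q) * (C ^ ((p - 1) / 2) * t ^ q) * F t ^ ((p + 1) / 2) := by
        rw [rpow_neg ht.le]; field_simp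
    _ ≤ m * t ^ (-q) * F t ^ ((p - 1) / 2) * F t ^ ((p + 1) / 2) := by gcongr
    _ = m * t ^ (-q) * F t ^ p := by rw [mul_assoc, ← rpow_add hFt]; ring_nf
    _ ≤ F'' t := hode

end SuperlinearODE

theorem stmt_0_general (p a q δ R m : ℝ) (hp : 1 < p) (ha : 1 ≤ a)
    (haq : (p - 1) * a > q - 2) (hδ : 0 < δ) (hm : 0 < m)
    (f : ℝ → ℝ) (hf : ContDiffOn ℝ 2 f (Set.Ici (0 : ℝ)))
    (hlow : ∀ t ≥ (0 : ℝ), f t ≥ δ * (t + R) ^ a)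
    (hode : ∀ t ≥ (0 : ℝ), deriv (deriv f) t ≥ m * (t + R) ^ (-q) * f t ^ p) :
    False := by
  have hf' : ContDiffOn ℝ 1 (deriv f) (Ioi 0) :=
    (hf.mono Ioi_subset_Ici_self).deriv_of_isOpen isOpen_Ioi le_rfl
  have hshift : ∀ᶠ s in atTop, 0 < s - R := by
    filter_upwards [eventually_gt_atTop R] with s hs
    linarith
  refine false_of_rpow_le_of_deriv_deriv_ge (F := fun s => f (s - R))
    (F' := fun s => deriv f (s - R)) (F'' := fun s => deriv (deriv f) (s - R))
    hp ha haq hδ hm ?_ ?_ ?_ ?_ <;> filter_upwards [hshift] with s hs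
  · exact HasDerivAt.comp_sub_const s R
      ((hf.contDiffAt (Ici_mem_nhds hs)).differentiableAt two_ne_zero).hasDerivAt
  · exact HasDerivAt.comp_sub_const s R
      ((hf'.contDiffAt (Ioi_mem_nhds hs)).differentiableAt one_ne_zero).hasDerivAt
  · simpa using hlow (s - R) hs.le
  · simpa using hode (s - R) hs.le

/-- Kato-type ODE blow-up lemma: a `C²` function on `[0,∞)` cannot satisfy
`f(t) ≥ δ(t+R)^a` and `f''(t) ≥ m(t+R)^{-q} f(t)^p` globally when
`p > 1`, `a ≥ 1` and `(p-1)a > q-2`. -/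
theorem stmt_0 (p a q δ R m : ℝ) (hp : 1 < p) (ha : 1 ≤ a)
    (haq : (p - 1) * a > q - 2) (hδ : 0 < δ) (hR : 0 < R) (hm : 0 < m)
    (f : ℝ → ℝ) (hf : ContDiffOn ℝ 2 f (Set.Ici (0 : ℝ)))
    (hlow : ∀ t ≥ (0 : ℝ), f t ≥ δ * (t + R) ^ a)
    (hode : ∀ t ≥ (0 : ℝ), deriv (deriv f) t ≥ m * (t + R) ^ (-q) * f t ^ p) :
    False :=
  stmt_0_general p a q δ R m hp ha haq hδ hm f hf hlow hode
end

section
/- For 0 < μ < 2 and n ≥ 2, the shifted Strauss exponent satisfies p_S(n+μ) > p_F(n), where p_F(n) = 1 + 2/n is the Fujita exponent. -/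
/-!
`p_S(ω)` is the larger root of `q_ω(p) = (ω-1)p² - (ω+1)p - 2`, so it suffices to show
`q_{n+μ}(1 + 2/n) < 0`. This value equals `2((μ-1)(n+2) - n²)/n²`, which is negative because
`μ - 1 < 1` and `n + 2 ≤ n²` for `n ≥ 2`.
-/

/-- The Strauss exponent: the positive root of `(ω-1)p² - (ω+1)p - 2 = 0` for `ω > 1`. -/
noncomputable def pS (ω : ℝ) : ℝ :=
  ((ω + 1) + Real.sqrt ((ω + 1) ^ 2 + 8 * (ω - 1))) / (2 * (ω - 1))

theorem lt_pS_of_quadratic_neg {ω p : ℝ} (hω : 1 < ω)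
    (hp : (ω - 1) * p ^ 2 - (ω + 1) * p - 2 < 0) : p < pS ω := by
  have hden : 0 < 2 * (ω - 1) := by linarith
  -- completing the square: `(2ap - b)² = 4a·q(p) + b² + 8a` with `a = ω - 1`, `b = ω + 1`
  have hsq : (2 * (ω - 1) * p - (ω + 1)) ^ 2 < (ω + 1) ^ 2 + 8 * (ω - 1) := by
    nlinarith
  have := Real.lt_sqrt_of_sq_lt hsq
  rw [pS, lt_div_iff₀ hden]
  linarith

theorem strauss_quadratic_at_fujita (N μ : ℝ) (hN : N ≠ 0) :
    (N + μ - 1) * (1 + 2 / N) ^ 2 - (N + μ + 1) * (1 + 2 / N) - 2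
      = 2 * ((μ - 1) * (N + 2) - N ^ 2) / N ^ 2 := by
  field_simp
  ring

/-- For `0 < μ < 2` and `n ≥ 2`, the shifted Strauss exponent exceeds the Fujita
exponent `p_F(n) = 1 + 2/n`. -/
theorem stmt_3 (n : ℕ) (hn : 2 ≤ n) (μ : ℝ) (hμ0 : 0 < μ) (hμ2 : μ < 2) :
    pS ((n : ℝ) + μ) > 1 + 2 / (n : ℝ) := by
  have hN : (2 : ℝ) ≤ n := by exact_mod_cast hn
  apply lt_pS_of_quadratic_neg (by linarith)
  rw [strauss_quadratic_at_fujita _ _ (by positivity)]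
  apply div_neg_of_neg_of_pos _ (by positivity)
  nlinarith
end

section
/- Let p > 1, n ≥ 2, R > 0, and let Λ(t) be a continuous increasing function with Λ(t) → ∞. Suppose φ : ℝⁿ → ℝ satisfies φ(x) ≤ C₀(1+|x|)^{-(n-1)/2} e^{|x|}. Then there is a constant C such that for all sufficiently large t, ∫_{|x| ≤ R+Λ(t)} φ(x)^{p/(p-1)} dx ≤ C (R+Λ(t))^{(n-1) - (n-1)p/(2(p-1))} e^{pΛ(t)/(p-1)}. -/
open MeasureTheory Filter

private lemma radial_pointwise (n : ℕ) (hn : 2 ≤ n) {q a M y : ℝ} (hq : 0 < q) (ha : 0 < a)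
    (hM : 1 ≤ M) (hgrow : M ^ a ≤ Real.exp (q * M / 4)) (hy0 : 0 < y) (hyM : y ≤ M) :
    y ^ (n - 1) * ((1 + y) ^ (-a) * Real.exp (q * y)) ≤
      2 ^ a * M ^ (((n : ℝ) - 1) - a) * Real.exp (q * M / 2) * Real.exp (y * (q / 2)) := by
  have hM0 : (0 : ℝ) < M := lt_of_lt_of_le one_pos hM
  have hyn : y ^ (n - 1) ≤ M ^ (n - 1) := pow_le_pow_left₀ hy0.le hyM _
  have hMn : (M : ℝ) ^ (n - 1) = M ^ ((n : ℝ) - 1) := by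
    rw [← Real.rpow_natCast M (n - 1)]
    congr 1
    have h1 : (1 : ℕ) ≤ n := by omega
    push_cast [Nat.cast_sub h1]
    ring
  have h2a : (1 : ℝ) ≤ 2 ^ a := by
    rw [show (1 : ℝ) = (2 : ℝ) ^ (0 : ℝ) by simp]
    exact Real.rpow_le_rpow_of_exponent_le one_le_two ha.le
  have hMe : (0 : ℝ) < M ^ (((n : ℝ) - 1) - a) := Real.rpow_pos_of_pos hM0 _
  have key : y ^ (n - 1) * (1 + y) ^ (-a) ≤
      2 ^ a * M ^ (((n : ℝ) - 1) - a) * Real.exp (q * (M - y) / 2) := by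
    rcases le_or_gt y (M / 2) with hc | hc
    · have h1 : (1 + y) ^ (-a) ≤ 1 :=
        Real.rpow_le_one_of_one_le_of_nonpos (by linarith) (by linarith)
      have h2 : y ^ (n - 1) * (1 + y) ^ (-a) ≤ M ^ ((n : ℝ) - 1) := by
        rw [← hMn]
        calc y ^ (n - 1) * (1 + y) ^ (-a) ≤ M ^ (n - 1) * 1 :=
              mul_le_mul hyn h1 (Real.rpow_nonneg (by linarith) _) (pow_nonneg hM0.le _)
          _ = M ^ (n - 1) := mul_one _
      have h3 : M ^ ((n : ℝ) - 1) = M ^ (((n : ℝ) - 1) - a) * M ^ a := by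
        rw [← Real.rpow_add hM0]
        ring_nf
      have h4 : Real.exp (q * M / 4) ≤ Real.exp (q * (M - y) / 2) := by
        apply Real.exp_le_exp.2
        nlinarith [mul_nonneg hq.le (by linarith : (0 : ℝ) ≤ M - 2 * y)]
      calc y ^ (n - 1) * (1 + y) ^ (-a) ≤ M ^ (((n : ℝ) - 1) - a) * M ^ a := by
            rw [← h3]; exact h2
        _ ≤ M ^ (((n : ℝ) - 1) - a) * Real.exp (q * (M - y) / 2) :=
            mul_le_mul_of_nonneg_left (le_trans hgrow h4) hMe.le
        _ ≤ 2 ^ a * M ^ (((n : ℝ) - 1) - a) * Real.exp (q * (M - y) / 2) := by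
            nlinarith [mul_nonneg (by linarith : (0:ℝ) ≤ 2 ^ a - 1)
              (mul_pos hMe (Real.exp_pos (q * (M - y) / 2))).le]
    · have hy2 : (0 : ℝ) < M / 2 := by linarith
      have h1 : (1 + y) ^ (-a) ≤ (M / 2) ^ (-a) :=
        Real.rpow_le_rpow_of_nonpos hy2 (by linarith) (by linarith)
      have h2 : ((M : ℝ) / 2) ^ (-a) = 2 ^ a * M ^ (-a) := by
        rw [Real.div_rpow hM0.le (by norm_num : (0 : ℝ) ≤ 2),
          Real.rpow_neg (by norm_num : (0 : ℝ) ≤ 2)]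
        field_simp
      calc y ^ (n - 1) * (1 + y) ^ (-a) ≤ M ^ ((n : ℝ) - 1) * (2 ^ a * M ^ (-a)) := by
            rw [← h2, ← hMn]
            exact mul_le_mul hyn h1 (Real.rpow_nonneg (by linarith) _) (pow_nonneg hM0.le _)
        _ = 2 ^ a * M ^ (((n : ℝ) - 1) - a) := by
            rw [show ((n : ℝ) - 1) - a = ((n : ℝ) - 1) + (-a) from sub_eq_add_neg _ _,
              Real.rpow_add hM0]; ring
        _ ≤ 2 ^ a * M ^ (((n : ℝ) - 1) - a) * Real.exp (q * (M - y) / 2) := by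
            refine le_mul_of_one_le_right (by positivity) (Real.one_le_exp ?_)
            have h5 : (0 : ℝ) ≤ M - y := by linarith
            positivity
  have hE : Real.exp (q * (M - y) / 2) * Real.exp (q * y) =
      Real.exp (q * M / 2) * Real.exp (y * (q / 2)) := by
    rw [← Real.exp_add, ← Real.exp_add]
    congr 1
    ring
  calc y ^ (n - 1) * ((1 + y) ^ (-a) * Real.exp (q * y))
      = (y ^ (n - 1) * (1 + y) ^ (-a)) * Real.exp (q * y) := by ring
    _ ≤ (2 ^ a * M ^ (((n : ℝ) - 1) - a) * Real.exp (q * (M - y) / 2)) * Real.exp (q * y) :=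
        mul_le_mul_of_nonneg_right key (Real.exp_nonneg _)
    _ = 2 ^ a * M ^ (((n : ℝ) - 1) - a) *
        (Real.exp (q * (M - y) / 2) * Real.exp (q * y)) := by ring
    _ = 2 ^ a * M ^ (((n : ℝ) - 1) - a) *
        (Real.exp (q * M / 2) * Real.exp (y * (q / 2))) := by rw [hE]
    _ = 2 ^ a * M ^ (((n : ℝ) - 1) - a) * Real.exp (q * M / 2) * Real.exp (y * (q / 2)) := by
        ring

/-- Spatial integral estimate: if `φ(x) ≤ C₀(1+|x|)^{-(n-1)/2} e^{|x|}` then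
`∫_{|x|≤R+Λ(t)} φ^{p/(p-1)} ≤ C (R+Λ(t))^{(n-1)-(n-1)p/(2(p-1))} e^{pΛ(t)/(p-1)}`
for all sufficiently large `t`. -/
theorem stmt_10 (n : ℕ) (hn : 2 ≤ n) (p R : ℝ) (hp : 1 < p) (hR : 0 < R)
    (Λ : ℝ → ℝ) (hΛc : Continuous Λ) (hΛm : StrictMono Λ)
    (hΛtop : Tendsto Λ atTop atTop)
    (φ : EuclideanSpace ℝ (Fin n) → ℝ) (hφ0 : ∀ x, 0 ≤ φ x)
    (C₀ : ℝ) (hC₀ : 0 < C₀)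
    (hφ : ∀ x, φ x ≤ C₀ * (1 + ‖x‖) ^ (-((n : ℝ) - 1) / 2) * Real.exp ‖x‖) :
    ∃ C : ℝ, 0 < C ∧ ∀ᶠ t in atTop,
      ∫ x in Metric.closedBall (0 : EuclideanSpace ℝ (Fin n)) (R + Λ t),
          φ x ^ (p / (p - 1)) ≤
        C * (R + Λ t) ^ (((n : ℝ) - 1) - ((n : ℝ) - 1) * p / (2 * (p - 1))) *
          Real.exp (p * Λ t / (p - 1)) := by
  have hp1 : (0 : ℝ) < p - 1 := by linarith
  set q : ℝ := p / (p - 1) with hqdef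
  have hq0 : 0 < q := by positivity
  set a : ℝ := ((n : ℝ) - 1) * p / (2 * (p - 1)) with hadef
  have hn1 : (1 : ℝ) ≤ (n : ℝ) - 1 := by
    have h2n : (2 : ℝ) ≤ (n : ℝ) := by exact_mod_cast hn
    linarith
  have ha : 0 < a := by
    rw [hadef]; positivity
  have haq : -((n : ℝ) - 1) / 2 * q = -a := by
    rw [hadef, hqdef]; field_simp
  haveI : Nonempty (Fin n) := ⟨⟨0, by omega⟩⟩
  haveI : Nontrivial (EuclideanSpace ℝ (Fin n)) := inferInstance
  set V : ℝ := (volume (Metric.ball (0 : EuclideanSpace ℝ (Fin n)) 1)).toReal with hVdef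
  have hV : 0 < V :=
    ENNReal.toReal_pos (Metric.measure_ball_pos _ _ one_pos).ne' measure_ball_lt_top.ne
  refine ⟨(n : ℝ) * V * (C₀ ^ q * (2 : ℝ) ^ a * (2 / q)) * Real.exp (q * R), by positivity, ?_⟩
  have hMtop : Tendsto (fun t => R + Λ t) atTop atTop :=
    tendsto_atTop_add_const_left _ R hΛtop
  have hgrow : ∀ᶠ s : ℝ in atTop, s ^ a ≤ Real.exp (q * s / 4) := by
    have h := (tendsto_exp_mul_div_rpow_atTop a (q / 4) (by positivity)).eventually_ge_atTop 1
    filter_upwards [h, eventually_gt_atTop (0 : ℝ)] with s h1 h0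
    rw [le_div_iff₀ (Real.rpow_pos_of_pos h0 a)] at h1
    calc s ^ a = 1 * s ^ a := (one_mul _).symm
      _ ≤ Real.exp (q / 4 * s) := h1
      _ = Real.exp (q * s / 4) := by ring_nf
  filter_upwards [hMtop.eventually (eventually_ge_atTop 1), hMtop.eventually hgrow]
    with t hM1 hgr
  set M : ℝ := R + Λ t with hMdef
  have hM0 : (0 : ℝ) < M := lt_of_lt_of_le one_pos hM1
  set e : ℝ := ((n : ℝ) - 1) - a with hedef
  set G : ℝ → ℝ := fun r => C₀ ^ q * ((1 + r) ^ (-a) * Real.exp (q * r)) with hGdef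
  have hGcont : Continuous fun x : EuclideanSpace ℝ (Fin n) => G ‖x‖ := by
    apply Continuous.mul continuous_const
    apply Continuous.mul
    · exact Continuous.rpow_const (continuous_const.add continuous_norm)
        (fun x => Or.inl (by positivity))
    · exact Real.continuous_exp.comp (continuous_const.mul continuous_norm)
  have hGint : IntegrableOn (fun x : EuclideanSpace ℝ (Fin n) => G ‖x‖)
      (Metric.closedBall 0 M) volume :=
    hGcont.continuousOn.integrableOn_compact (isCompact_closedBall _ _)
  -- Step 1: pointwise bound of `φ ^ q` by `G ∘ norm`
  have step1 : ∫ x in Metric.closedBall (0 : EuclideanSpace ℝ (Fin n)) M, φ x ^ q ≤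
      ∫ x in Metric.closedBall (0 : EuclideanSpace ℝ (Fin n)) M, G ‖x‖ := by
    by_cases hint : IntegrableOn (fun x => φ x ^ q)
        (Metric.closedBall (0 : EuclideanSpace ℝ (Fin n)) M) volume
    · refine setIntegral_mono_on hint hGint measurableSet_closedBall (fun x _ => ?_)
      have hb : (0 : ℝ) ≤ 1 + ‖x‖ := by positivity
      have h1 : φ x ^ q ≤ (C₀ * (1 + ‖x‖) ^ (-((n : ℝ) - 1) / 2) * Real.exp ‖x‖) ^ q :=
        Real.rpow_le_rpow (hφ0 x) (hφ x) hq0.le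
      have h2 : (C₀ * (1 + ‖x‖) ^ (-((n : ℝ) - 1) / 2) * Real.exp ‖x‖) ^ q = G ‖x‖ := by
        simp only [hGdef]
        rw [Real.mul_rpow (mul_nonneg hC₀.le (Real.rpow_nonneg hb _)) (Real.exp_nonneg _),
          Real.mul_rpow hC₀.le (Real.rpow_nonneg hb _), ← Real.rpow_mul hb, haq,
          ← Real.exp_mul, mul_comm ‖x‖ q]
        ring
      rw [← h2]
      exact h1
    · rw [integral_undef hint]
      refine setIntegral_nonneg measurableSet_closedBall (fun x _ => ?_)
      simp only [hGdef]
      positivity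
  -- Step 2: polar coordinates
  have step2 : ∫ x in Metric.closedBall (0 : EuclideanSpace ℝ (Fin n)) M, G ‖x‖ =
      (n : ℝ) * (V * ∫ y in Set.Ioc (0 : ℝ) M, y ^ (n - 1) * G y) := by
    have hind : ∀ x : EuclideanSpace ℝ (Fin n),
        (Metric.closedBall (0 : EuclideanSpace ℝ (Fin n)) M).indicator
          (fun x => G ‖x‖) x = (Set.Iic M).indicator G ‖x‖ := by
      intro x
      by_cases h : ‖x‖ ≤ M
      · rw [Set.indicator_of_mem (by simpa [mem_closedBall_zero_iff] using h)
            (fun x => G ‖x‖),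
          Set.indicator_of_mem (Set.mem_Iic.2 h) G]
      · rw [Set.indicator_of_notMem
            (by simpa [mem_closedBall_zero_iff] using h) (fun x => G ‖x‖),
          Set.indicator_of_notMem (fun hc => h (Set.mem_Iic.1 hc)) G]
    have hsmul : ∀ y : ℝ, y ^ (Module.finrank ℝ (EuclideanSpace ℝ (Fin n)) - 1) •
        (Set.Iic M).indicator G y =
        (Set.Iic M).indicator (fun y => y ^ (n - 1) * G y) y := by
      intro y
      by_cases h : y ∈ Set.Iic M <;>
        simp [h, finrank_euclideanSpace_fin, smul_eq_mul]
    calc ∫ x in Metric.closedBall (0 : EuclideanSpace ℝ (Fin n)) M, G ‖x‖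
        = ∫ x : EuclideanSpace ℝ (Fin n), (Set.Iic M).indicator G ‖x‖ := by
          rw [← integral_indicator measurableSet_closedBall]
          simp only [hind]
      _ = Module.finrank ℝ (EuclideanSpace ℝ (Fin n)) •
          (volume (Metric.ball (0 : EuclideanSpace ℝ (Fin n)) 1)).toReal •
          ∫ y in Set.Ioi (0 : ℝ),
            y ^ (Module.finrank ℝ (EuclideanSpace ℝ (Fin n)) - 1) •
              (Set.Iic M).indicator G y :=
          integral_fun_norm_addHaar volume _
      _ = (n : ℝ) * (V * ∫ y in Set.Ioc (0 : ℝ) M, y ^ (n - 1) * G y) := by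
          simp only [hsmul]
          rw [setIntegral_indicator measurableSet_Iic, Set.Ioi_inter_Iic,
            finrank_euclideanSpace_fin, nsmul_eq_mul, smul_eq_mul, hVdef]
  -- Step 3: bound the radial integral
  have step3 : ∫ y in Set.Ioc (0 : ℝ) M, y ^ (n - 1) * G y ≤
      (C₀ ^ q * (2 ^ a * M ^ e * Real.exp (q * M / 2))) *
        ((2 / q) * (Real.exp (M * (q / 2)) - 1)) := by
    have hKpos : (0 : ℝ) ≤ C₀ ^ q * (2 ^ a * M ^ e * Real.exp (q * M / 2)) := by positivity
    have hint1 : IntegrableOn (fun y : ℝ => y ^ (n - 1) * G y) (Set.Ioc 0 M) volume := by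
      refine ((ContinuousOn.mul (continuous_pow (n - 1)).continuousOn ?_).integrableOn_compact
        isCompact_Icc).mono_set Set.Ioc_subset_Icc_self
      simp only [hGdef]
      refine ContinuousOn.mul continuousOn_const (ContinuousOn.mul ?_ ?_)
      · refine ContinuousOn.rpow_const (continuousOn_const.add continuousOn_id)
          (fun y hy => Or.inl ?_)
        have := hy.1
        positivity
      · exact (Real.continuous_exp.comp (continuous_const.mul continuous_id)).continuousOn
    have hint2 : IntegrableOn (fun y : ℝ =>
        (C₀ ^ q * (2 ^ a * M ^ e * Real.exp (q * M / 2))) * Real.exp (y * (q / 2)))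
        (Set.Ioc 0 M) volume := by
      refine ((Continuous.continuousOn (Continuous.mul continuous_const ?_)).integrableOn_compact
        isCompact_Icc).mono_set Set.Ioc_subset_Icc_self
      exact Real.continuous_exp.comp (continuous_id.mul continuous_const)
    have hmono : ∫ y in Set.Ioc (0 : ℝ) M, y ^ (n - 1) * G y ≤
        ∫ y in Set.Ioc (0 : ℝ) M,
          (C₀ ^ q * (2 ^ a * M ^ e * Real.exp (q * M / 2))) * Real.exp (y * (q / 2)) := by
      refine setIntegral_mono_on hint1 hint2 measurableSet_Ioc (fun y hy => ?_)
      have hrp := radial_pointwise n hn hq0 ha hM1 hgr hy.1 hy.2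
      calc y ^ (n - 1) * G y
          = C₀ ^ q * (y ^ (n - 1) * ((1 + y) ^ (-a) * Real.exp (q * y))) := by
            simp only [hGdef]; ring
        _ ≤ C₀ ^ q * (2 ^ a * M ^ e * Real.exp (q * M / 2) * Real.exp (y * (q / 2))) := by
            rw [hedef]
            exact mul_le_mul_of_nonneg_left hrp (by positivity)
        _ = (C₀ ^ q * (2 ^ a * M ^ e * Real.exp (q * M / 2))) * Real.exp (y * (q / 2)) := by
            ring
    have hcomp : ∫ y in Set.Ioc (0 : ℝ) M, Real.exp (y * (q / 2)) =
        (2 / q) * (Real.exp (M * (q / 2)) - 1) := by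
      rw [← intervalIntegral.integral_of_le hM0.le,
        intervalIntegral.integral_comp_mul_right Real.exp (by positivity : q / 2 ≠ 0)]
      rw [zero_mul, integral_exp, Real.exp_zero, smul_eq_mul, inv_div]
    calc ∫ y in Set.Ioc (0 : ℝ) M, y ^ (n - 1) * G y
        ≤ ∫ y in Set.Ioc (0 : ℝ) M,
          (C₀ ^ q * (2 ^ a * M ^ e * Real.exp (q * M / 2))) * Real.exp (y * (q / 2)) := hmono
      _ = (C₀ ^ q * (2 ^ a * M ^ e * Real.exp (q * M / 2))) *
          ∫ y in Set.Ioc (0 : ℝ) M, Real.exp (y * (q / 2)) := integral_const_mul _ _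
      _ = (C₀ ^ q * (2 ^ a * M ^ e * Real.exp (q * M / 2))) *
          ((2 / q) * (Real.exp (M * (q / 2)) - 1)) := by rw [hcomp]
  -- Final assembly
  have hqΛ : Real.exp (p * Λ t / (p - 1)) = Real.exp (q * Λ t) := by
    rw [hqdef, div_mul_eq_mul_div]
  have hEE : Real.exp (q * M / 2) * Real.exp (M * (q / 2)) =
      Real.exp (q * R) * Real.exp (q * Λ t) := by
    rw [← Real.exp_add, ← Real.exp_add]
    congr 1
    rw [hMdef]
    ring
  have hfin : Real.exp (q * M / 2) * (Real.exp (M * (q / 2)) - 1) ≤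
      Real.exp (q * R) * Real.exp (q * Λ t) := by
    calc Real.exp (q * M / 2) * (Real.exp (M * (q / 2)) - 1)
        ≤ Real.exp (q * M / 2) * Real.exp (M * (q / 2)) := by
          nlinarith [Real.exp_pos (q * M / 2)]
      _ = Real.exp (q * R) * Real.exp (q * Λ t) := hEE
  calc ∫ x in Metric.closedBall (0 : EuclideanSpace ℝ (Fin n)) M, φ x ^ q
      ≤ ∫ x in Metric.closedBall (0 : EuclideanSpace ℝ (Fin n)) M, G ‖x‖ := step1
    _ = (n : ℝ) * (V * ∫ y in Set.Ioc (0 : ℝ) M, y ^ (n - 1) * G y) := step2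
    _ ≤ (n : ℝ) * (V * ((C₀ ^ q * (2 ^ a * M ^ e * Real.exp (q * M / 2))) *
          ((2 / q) * (Real.exp (M * (q / 2)) - 1)))) :=
        mul_le_mul_of_nonneg_left (mul_le_mul_of_nonneg_left step3 hV.le)
          (by positivity)
    _ = ((n : ℝ) * V * (C₀ ^ q * (2 : ℝ) ^ a * (2 / q)) * M ^ e) *
          (Real.exp (q * M / 2) * (Real.exp (M * (q / 2)) - 1)) := by ring
    _ ≤ ((n : ℝ) * V * (C₀ ^ q * (2 : ℝ) ^ a * (2 / q)) * M ^ e) *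
          (Real.exp (q * R) * Real.exp (q * Λ t)) :=
        mul_le_mul_of_nonneg_left hfin (by positivity)
    _ = (n : ℝ) * V * (C₀ ^ q * (2 : ℝ) ^ a * (2 / q)) * Real.exp (q * R) * M ^ e *
          Real.exp (q * Λ t) := by ring
    _ = (n : ℝ) * V * (C₀ ^ q * (2 : ℝ) ^ a * (2 / q)) * Real.exp (q * R) * M ^ e *
          Real.exp (p * Λ t / (p - 1)) := by rw [hqΛ]
end

section
/- Let λ(t) = C_ℓ t^{1/2} K_{1/(2ℓ+2)}(t^{ℓ+1}/(ℓ+1)) with ℓ ≥ 0 and K_α the modified Bessel function of the second kind. Then λ(t) and -λ'(t) are both positive and decreasing on [t₀,∞), lim_{t→∞} λ(t) = lim_{t→∞} λ'(t) = 0, and there exists C > 1 such that 1/C ≤ -λ'(t)/(λ(t) t^ℓ) ≤ C for all t ≥ t₀. -/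
open Filter

/-- The modified Bessel function of the second kind,
`K_α(t) = ∫₀^∞ e^{-t cosh z} cosh(αz) dz`. -/
noncomputable def besselK (α t : ℝ) : ℝ :=
  ∫ z in Set.Ioi (0 : ℝ), Real.exp (-t * Real.cosh z) * Real.cosh (α * z)

/-!
Differentiating under the integral sign and integrating by parts against `d(e^{-x cosh z})`
give `K_α' = -K_{1-α} - (α / x) K_α`. Hence for `p = m α` the rescaled function
`t ^ p K_α(t ^ m / m)` has derivative `-t ^ (p + m - 1) K_{1-α}(t ^ m / m)`. With `m = ℓ + 1`
and `α = 1 / (2m)`, both `λ` and `-λ'` are positive multiples of such functions, so they are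
positive, decreasing, and decay like `exp (-t ^ m / m)`. The ratio `-λ' / (λ t^ℓ)` equals
`K_{1-α}(u) / K_α(u)` with `u = t ^ m / m`: it is at least `1` since `K_α` increases with `|α|`,
and at most `2 + 1 / u` since `K_{1-α} ≤ K_0 + e^{-u} / u`, while AM-GM under the integral gives
`e^{-u} / u ≤ (1 + 1 / u) K_0(u)`.
-/

open MeasureTheory Real Set Topology

lemma one_add_sq_div_two_le_cosh (z : ℝ) : 1 + z ^ 2 / 2 ≤ cosh z := by
  have h : (z / 2) ^ 2 ≤ sinh (z / 2) ^ 2 := by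
    rw [← sq_abs, ← sq_abs (sinh _), abs_sinh]
    exact pow_le_pow_left₀ (abs_nonneg _) (self_le_sinh_iff.2 (abs_nonneg _)) 2
  have hz := cosh_two_mul (z / 2)
  rw [show 2 * (z / 2) = z by ring, cosh_sq] at hz
  nlinarith

lemma cosh_le_exp_abs (y : ℝ) : cosh y ≤ exp |y| := by
  rw [← cosh_abs, ← cosh_add_sinh]
  exact le_add_of_nonneg_right (sinh_nonneg_iff.2 (abs_nonneg y))

lemma abs_sinh_le_cosh (y : ℝ) : |sinh y| ≤ cosh y := by
  rw [abs_sinh, ← cosh_abs]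
  exact (sinh_lt_cosh _).le

lemma exp_neg_mul_cosh_mul_exp_le {x : ℝ} (hx : 0 < x) (b z : ℝ) :
    exp (-x * cosh z) * exp (b * z) ≤ exp ((b + 1) ^ 2 / (2 * x) - x) * exp (-z) := by
  rw [← exp_add, ← exp_add, exp_le_exp]
  have hc := one_add_sq_div_two_le_cosh z
  have hsq : 0 ≤ (x * z - (b + 1)) ^ 2 / (2 * x) := by positivity
  have hexpand : (x * z - (b + 1)) ^ 2 / (2 * x)
      = x * z ^ 2 / 2 - (b + 1) * z + (b + 1) ^ 2 / (2 * x) := by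
    field_simp
    ring
  nlinarith

lemma abs_cosh_mul_le_exp (α : ℝ) {z : ℝ} (hz : 0 ≤ z) :
    |cosh (α * z)| ≤ exp (|α| * z) := by
  rw [abs_of_pos (cosh_pos _)]
  simpa [abs_mul, abs_of_nonneg hz] using cosh_le_exp_abs (α * z)

lemma abs_sinh_mul_le_exp (α : ℝ) {z : ℝ} (hz : 0 ≤ z) :
    |sinh (α * z)| ≤ exp (|α| * z) :=
  (abs_sinh_le_cosh _).trans ((le_abs_self _).trans (abs_cosh_mul_le_exp α hz))

section Integrability

variable {x C b : ℝ} {g : ℝ → ℝ}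

lemma abs_exp_neg_mul_cosh_mul_le (hx : 0 < x) {z : ℝ} (hgz : |g z| ≤ C * exp (b * z)) :
    |exp (-x * cosh z) * g z| ≤ C * exp ((b + 1) ^ 2 / (2 * x) - x) * exp (-z) := by
  rw [abs_mul, abs_of_pos (exp_pos _), mul_assoc C]
  calc exp (-x * cosh z) * |g z| ≤ exp (-x * cosh z) * (C * exp (b * z)) := by gcongr
    _ = C * (exp (-x * cosh z) * exp (b * z)) := by ring
    _ ≤ C * (exp ((b + 1) ^ 2 / (2 * x) - x) * exp (-z)) := by
      have hC : 0 ≤ C := nonneg_of_mul_nonneg_left ((abs_nonneg _).trans hgz) (exp_pos _)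
      exact mul_le_mul_of_nonneg_left (exp_neg_mul_cosh_mul_exp_le hx b z) hC

lemma integrableOn_exp_neg_mul_cosh_mul (hx : 0 < x) (hg : Continuous g)
    (hgb : ∀ z, 0 < z → |g z| ≤ C * exp (b * z)) :
    IntegrableOn (fun z => exp (-x * cosh z) * g z) (Ioi 0) := by
  refine Integrable.mono' ((exp_neg_integrableOn_Ioi 0 one_pos).const_mul
    (C * exp ((b + 1) ^ 2 / (2 * x) - x))) (by fun_prop) ?_
  filter_upwards [ae_restrict_mem measurableSet_Ioi] with z hz
  simpa using abs_exp_neg_mul_cosh_mul_le hx (hgb z hz)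

lemma tendsto_exp_neg_mul_cosh_mul (hx : 0 < x) (hgb : ∀ z, 0 < z → |g z| ≤ C * exp (b * z)) :
    Tendsto (fun z => exp (-x * cosh z) * g z) atTop (𝓝 0) := by
  have hdecay :
      Tendsto (fun z => C * exp ((b + 1) ^ 2 / (2 * x) - x) * exp (-z)) atTop (𝓝 0) := by
    simpa using (tendsto_exp_neg_atTop_nhds_zero).const_mul (C * exp ((b + 1) ^ 2 / (2 * x) - x))
  refine squeeze_zero_norm' ?_ hdecay
  filter_upwards [eventually_gt_atTop 0] with z hz
  exact abs_exp_neg_mul_cosh_mul_le hx (hgb z hz)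

lemma abs_sinh_mul_le_of_abs_le (hgb : ∀ z, 0 < z → |g z| ≤ C * exp (b * z))
    (z : ℝ) (hz : 0 < z) :
    |sinh z * g z| ≤ C * exp ((b + 1) * z) := by
  have hs : |sinh z| ≤ exp z := by
    simpa [abs_of_pos hz] using (abs_sinh_le_cosh z).trans (cosh_le_exp_abs z)
  rw [abs_mul, add_mul, one_mul, exp_add]
  calc |sinh z| * |g z| ≤ exp z * (C * exp (b * z)) := by gcongr; exact hgb z hz
    _ = C * (exp (b * z) * exp z) := by ring

lemma integral_exp_neg_mul_cosh_mul_sinh_mul (hx : 0 < x) {g' : ℝ → ℝ}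
    (hg : ∀ z, HasDerivAt g (g' z) z) (hg' : Continuous g')
    (hgb : ∀ z, 0 < z → |g z| ≤ C * exp (b * z))
    (hg'b : ∀ z, 0 < z → |g' z| ≤ C * exp (b * z)) :
    ∫ z in Ioi 0, exp (-x * cosh z) * (sinh z * g z)
      = (exp (-x) * g 0 + ∫ z in Ioi 0, exp (-x * cosh z) * g' z) / x := by
  have hgc : Continuous g := continuous_iff_continuousAt.2 fun z => (hg z).continuousAt
  have hI := integrableOn_exp_neg_mul_cosh_mul hx (by fun_prop) (abs_sinh_mul_le_of_abs_le hgb)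
  have hI' := integrableOn_exp_neg_mul_cosh_mul hx hg' hg'b
  have hderiv : ∀ z, HasDerivAt (fun z => -(exp (-x * cosh z) * g z) / x)
      (exp (-x * cosh z) * (sinh z * g z) - (exp (-x * cosh z) * g' z) / x) z := by
    intro z
    refine ((((hasDerivAt_cosh z).const_mul (-x)).exp.mul (hg z)).neg.div_const x).congr_deriv ?_
    field_simp
    ring
  have hftc := integral_Ioi_of_hasDerivAt_of_tendsto' (fun z _ => hderiv z)
    (hI.sub (hI'.div_const x))
    (by simpa using ((tendsto_exp_neg_mul_cosh_mul hx hgb).neg.div_const x))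
  rw [integral_sub hI (hI'.div_const x), integral_div] at hftc
  simp only [cosh_zero, mul_one] at hftc
  set I := ∫ z in Ioi 0, exp (-x * cosh z) * (sinh z * g z)
  set J := ∫ z in Ioi 0, exp (-x * cosh z) * g' z
  field_simp at hftc ⊢
  linarith

end Integrability

lemma integrableOn_besselK_integrand (α : ℝ) {x : ℝ} (hx : 0 < x) :
    IntegrableOn (fun z => exp (-x * cosh z) * cosh (α * z)) (Ioi 0) :=
  integrableOn_exp_neg_mul_cosh_mul hx (by fun_prop)
    fun z hz => (abs_cosh_mul_le_exp α hz.le).trans_eq (one_mul _).symm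

lemma besselK_pos (α : ℝ) {x : ℝ} (hx : 0 < x) : 0 < besselK α x := by
  rw [besselK, setIntegral_pos_iff_support_of_nonneg_ae (ae_of_all _ fun z => by positivity)
    (integrableOn_besselK_integrand α hx)]
  have : Function.support (fun z => exp (-x * cosh z) * cosh (α * z)) = univ :=
    Function.support_eq_univ fun z => by positivity
  rw [this, univ_inter, Real.volume_Ioi]
  exact ENNReal.zero_lt_top

lemma besselK_le_besselK {a b x : ℝ} (hab : |a| ≤ |b|) (hx : 0 < x) :
    besselK a x ≤ besselK b x := by
  refine setIntegral_mono_on (integrableOn_besselK_integrand a hx)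
    (integrableOn_besselK_integrand b hx) measurableSet_Ioi fun z hz => ?_
  gcongr
  rw [cosh_le_cosh, abs_mul, abs_mul]
  gcongr

lemma besselK_le_exp_sub_mul (α : ℝ) {w x : ℝ} (hw : 0 < w) (hwx : w ≤ x) :
    besselK α x ≤ exp (w - x) * besselK α w := by
  rw [besselK, besselK, ← integral_const_mul]
  refine setIntegral_mono_on (integrableOn_besselK_integrand α (hw.trans_le hwx))
    ((integrableOn_besselK_integrand α hw).const_mul _) measurableSet_Ioi fun z _ => ?_
  rw [← mul_assoc, ← exp_add]
  gcongr
  nlinarith [one_le_cosh z]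

lemma integrableOn_exp_neg_mul_cosh_mul_sinh_mul_sinh (α : ℝ) {x : ℝ} (hx : 0 < x) :
    IntegrableOn (fun z => exp (-x * cosh z) * (sinh z * sinh (α * z))) (Ioi 0) :=
  integrableOn_exp_neg_mul_cosh_mul hx (by fun_prop)
    (abs_sinh_mul_le_of_abs_le fun _ hz => (abs_sinh_mul_le_exp α hz.le).trans_eq (one_mul _).symm)

lemma integral_exp_neg_mul_cosh_mul_sinh_mul_sinh (α : ℝ) {x : ℝ} (hx : 0 < x) :
    ∫ z in Ioi 0, exp (-x * cosh z) * (sinh z * sinh (α * z)) = α / x * besselK α x := by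
  have hd : ∀ z, HasDerivAt (fun z => sinh (α * z)) (α * cosh (α * z)) z := fun z => by
    simpa [mul_comm] using ((hasDerivAt_id' z).const_mul α).sinh
  have hC : 1 ≤ max 1 |α| := le_max_left _ _
  rw [integral_exp_neg_mul_cosh_mul_sinh_mul (C := max 1 |α|) (b := |α|) hx hd (by fun_prop)
    (fun z hz => (abs_sinh_mul_le_exp α hz.le).trans (le_mul_of_one_le_left (exp_pos _).le hC))
    (fun z hz => ?_)]
  · simp only [mul_zero, sinh_zero, zero_add, mul_left_comm (exp _) α, integral_const_mul,
      besselK]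
    ring
  · rw [abs_mul]
    exact mul_le_mul (le_max_right _ _) (abs_cosh_mul_le_exp α hz.le) (abs_nonneg _)
      (zero_le_one.trans hC)

lemma integral_exp_neg_mul_cosh_mul_sinh {x : ℝ} (hx : 0 < x) :
    ∫ z in Ioi 0, exp (-x * cosh z) * sinh z = exp (-x) / x := by
  simpa using integral_exp_neg_mul_cosh_mul_sinh_mul (C := 1) (b := 0) hx
    (fun z => hasDerivAt_const z (1 : ℝ)) continuous_const (fun _ _ => by simp)
    (fun _ _ => by simp)

lemma integrableOn_exp_neg_mul_cosh_mul_sinh {x : ℝ} (hx : 0 < x) :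
    IntegrableOn (fun z => exp (-x * cosh z) * sinh z) (Ioi 0) :=
  integrableOn_exp_neg_mul_cosh_mul (C := 1) (b := 1) hx continuous_sinh
    fun z hz => by simpa using abs_sinh_mul_le_exp 1 hz.le

lemma hasDerivAt_besselK (α : ℝ) {x : ℝ} (hx : 0 < x) :
    HasDerivAt (besselK α) (-(besselK (1 - α) x + α / x * besselK α x)) x := by
  have hx2 : 0 < x / 2 := half_pos hx
  have hdom : IntegrableOn (fun z => exp (-(x / 2) * cosh z) * (cosh z * cosh (α * z))) (Ioi 0) :=
    integrableOn_exp_neg_mul_cosh_mul (C := 1) (b := 1 + |α|) hx2 (by fun_prop) fun z hz => by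
      rw [abs_mul, add_mul, exp_add, one_mul]
      exact mul_le_mul (by simpa using abs_cosh_mul_le_exp 1 hz.le)
        (by simpa using abs_cosh_mul_le_exp α hz.le) (abs_nonneg _) (exp_pos _).le
  have key := hasDerivAt_integral_of_dominated_loc_of_deriv_le (μ := volume.restrict (Ioi 0))
    (F := fun t z => exp (-t * cosh z) * cosh (α * z))
    (F' := fun t z => -(exp (-t * cosh z) * (cosh z * cosh (α * z))))
    (bound := fun z => exp (-(x / 2) * cosh z) * (cosh z * cosh (α * z)))
    (Metric.ball_mem_nhds x hx2)
    (.of_forall fun t => (by fun_prop : Continuous _).aestronglyMeasurable)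
    (integrableOn_besselK_integrand α hx) (by fun_prop : Continuous _).aestronglyMeasurable
    ?_ hdom ?_
  · have hprod : ∀ z, cosh z * cosh (α * z) = cosh ((1 - α) * z) + sinh z * sinh (α * z) :=
      fun z => by rw [sub_mul, one_mul, cosh_sub]; ring
    have h := key.2
    simp only [hprod, mul_add, integral_neg] at h
    rwa [integral_add (integrableOn_besselK_integrand (1 - α) hx)
      (integrableOn_exp_neg_mul_cosh_mul_sinh_mul_sinh α hx),
      integral_exp_neg_mul_cosh_mul_sinh_mul_sinh α hx] at h
  · refine ae_of_all _ fun z t ht => ?_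
    have ht' : x / 2 ≤ t := by
      rw [Metric.mem_ball, Real.dist_eq, abs_lt] at ht
      linarith
    rw [norm_neg, Real.norm_of_nonneg (by positivity)]
    gcongr
  · refine ae_of_all _ fun z t _ => ?_
    simpa [mul_comm, mul_left_comm, mul_assoc] using
      (((hasDerivAt_id t).neg.mul_const (cosh z)).exp).mul_const (cosh (α * z))

lemma besselK_le_besselK_zero_add {β x : ℝ} (hβ : |β| ≤ 1) (hx : 0 < x) :
    besselK β x ≤ besselK 0 x + exp (-x) / x := by
  rw [← integral_exp_neg_mul_cosh_mul_sinh hx, besselK, besselK,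
    ← integral_add (integrableOn_besselK_integrand 0 hx)
      (integrableOn_exp_neg_mul_cosh_mul_sinh hx)]
  refine setIntegral_mono_on (integrableOn_besselK_integrand β hx)
    ((integrableOn_besselK_integrand 0 hx).add (integrableOn_exp_neg_mul_cosh_mul_sinh hx))
    measurableSet_Ioi fun z hz => ?_
  have hβz : cosh (β * z) ≤ cosh z := by
    rw [cosh_le_cosh, abs_mul]
    exact mul_le_of_le_one_left (abs_nonneg z) hβ
  have hz : cosh z ≤ 1 + sinh z := by
    linarith [cosh_sub_sinh z, exp_le_one_iff.2 (neg_nonpos.2 (le_of_lt hz))]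
  rw [zero_mul, cosh_zero, ← mul_add]
  gcongr
  exact hβz.trans hz

lemma exp_neg_div_le_besselK_zero {x : ℝ} (hx : 0 < x) :
    exp (-x) / x ≤ (1 + 1 / x) * besselK 0 x := by
  have hK₁ := besselK_le_besselK_zero_add (β := 1) (by simp) hx
  have hK₀ := integrableOn_besselK_integrand 0 hx
  have hS := integrableOn_exp_neg_mul_cosh_mul_sinh_mul_sinh 1 hx
  -- `sinh z ≤ 1 / (2x) + (x / 2) sinh² z` (AM-GM), integrated against `exp (-x cosh z)`
  have hAMGM : exp (-x) / x ≤ besselK 0 x / (2 * x) + besselK 1 x / 2 := by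
    have hint := integral_exp_neg_mul_cosh_mul_sinh_mul_sinh 1 hx
    rw [← integral_exp_neg_mul_cosh_mul_sinh hx]
    calc ∫ z in Ioi 0, exp (-x * cosh z) * sinh z
        ≤ ∫ z in Ioi 0, (exp (-x * cosh z) * cosh (0 * z) / (2 * x)
            + x / 2 * (exp (-x * cosh z) * (sinh z * sinh (1 * z)))) := by
          refine setIntegral_mono_on (integrableOn_exp_neg_mul_cosh_mul_sinh hx)
            ((hK₀.div_const _).add (hS.const_mul _)) measurableSet_Ioi fun z _ => ?_
          have h := sq_nonneg (x * sinh z - 1)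
          have he := exp_pos (-x * cosh z)
          rw [zero_mul, cosh_zero, one_mul]
          field_simp
          nlinarith [mul_nonneg he.le h]
      _ = besselK 0 x / (2 * x) + besselK 1 x / 2 := by
          rw [integral_add (hK₀.div_const _) (hS.const_mul _), integral_div, integral_const_mul,
            hint]
          change besselK 0 x / (2 * x) + _ = _
          field_simp
  have e₁ : (1 + 1 / x) * besselK 0 x = besselK 0 x + besselK 0 x / x := by ring
  have e₂ : besselK 0 x / (2 * x) = besselK 0 x / x / 2 := by ring
  linarith

lemma besselK_le_mul_besselK (α : ℝ) {β x : ℝ} (hβ : |β| ≤ 1) (hx : 0 < x) :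
    besselK β x ≤ (2 + 1 / x) * besselK α x := by
  have hK₀ : besselK 0 x ≤ besselK α x := besselK_le_besselK (by simp) hx
  calc besselK β x ≤ besselK 0 x + exp (-x) / x := besselK_le_besselK_zero_add hβ hx
    _ ≤ besselK 0 x + (1 + 1 / x) * besselK 0 x := by gcongr; exact exp_neg_div_le_besselK_zero hx
    _ = (2 + 1 / x) * besselK 0 x := by ring
    _ ≤ (2 + 1 / x) * besselK α x := by gcongr

lemma besselK_one_sub_div_besselK_mem_Icc {ν x : ℝ} (hν₀ : 0 ≤ ν) (hν : ν ≤ 1 / 2)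
    (hx : 0 < x) :
    besselK (1 - ν) x / besselK ν x ∈ Icc 1 (2 + 1 / x) := by
  have hK := besselK_pos ν hx
  constructor
  · rw [one_le_div hK]
    refine besselK_le_besselK ?_ hx
    rw [abs_of_nonneg hν₀, abs_of_nonneg (by linarith)]
    linarith
  · rw [div_le_iff₀ hK]
    exact besselK_le_mul_besselK ν (by rw [abs_le]; constructor <;> linarith) hx

noncomputable def rescaledBesselK (m p α t : ℝ) : ℝ :=
  t ^ p * besselK α (t ^ m / m)

section Rescaled

variable {m : ℝ}

lemma rescaledBesselK_pos (hm : 0 < m) (p α : ℝ) {t : ℝ} (ht : 0 < t) :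
    0 < rescaledBesselK m p α t :=
  mul_pos (rpow_pos_of_pos ht p) (besselK_pos α (by positivity))

lemma hasDerivAt_rescaledBesselK (hm : 0 < m) {p α : ℝ} (hp : p = m * α) {t : ℝ}
    (ht : 0 < t) :
    HasDerivAt (rescaledBesselK m p α) (-rescaledBesselK m (p + (m - 1)) (1 - α) t) t := by
  have hu : HasDerivAt (fun s => s ^ m / m) (t ^ (m - 1)) t := by
    refine ((hasDerivAt_rpow_const (p := m) (Or.inl ht.ne')).div_const m).congr_deriv ?_
    rw [mul_div_cancel_left₀ _ hm.ne']
  have hK := (hasDerivAt_besselK α (by positivity : 0 < t ^ m / m)).comp t hu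
  refine ((hasDerivAt_rpow_const (p := p) (Or.inl ht.ne')).mul hK).congr_deriv ?_
  have hscale : t ^ p * (α / (t ^ m / m)) * t ^ (m - 1) = p * t ^ (p - 1) := by
    have e₁ : t ^ p = t ^ (p - 1) * t := by rw [← rpow_add_one ht.ne', sub_add_cancel]
    have e₂ : t ^ m = t ^ (m - 1) * t := by rw [← rpow_add_one ht.ne', sub_add_cancel]
    have : 0 < t ^ (m - 1) := rpow_pos_of_pos ht _
    rw [e₁, e₂, hp]
    field_simp
  simp only [Function.comp_apply, rescaledBesselK, rpow_add ht]
  linear_combination (-besselK α (t ^ m / m)) * hscale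

lemma tendsto_rescaledBesselK_atTop (hm : 0 < m) (p α : ℝ) :
    Tendsto (rescaledBesselK m p α) atTop (𝓝 0) := by
  have hu : Tendsto (fun t : ℝ => t ^ m / m) atTop atTop :=
    (tendsto_rpow_atTop hm).atTop_div_const hm
  have hdecay : Tendsto (fun t : ℝ => t ^ p * exp (-(1 / m) * t ^ m)) atTop (𝓝 0) := by
    refine ((tendsto_rpow_mul_exp_neg_mul_atTop_nhds_zero (p / m) (1 / m) (by positivity)).comp
      (tendsto_rpow_atTop hm)).congr' ?_
    filter_upwards [eventually_ge_atTop 0] with t ht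
    simp only [Function.comp, ← rpow_mul ht, mul_div_cancel₀ p hm.ne']
  have hbound := hdecay.const_mul (exp 1 * besselK α 1)
  rw [mul_zero] at hbound
  refine squeeze_zero' ?_ ?_ hbound
  · filter_upwards [eventually_gt_atTop 0] with t ht
    exact (rescaledBesselK_pos hm p α ht).le
  · filter_upwards [eventually_gt_atTop 0, hu.eventually_ge_atTop 1] with t ht hut
    calc rescaledBesselK m p α t ≤ t ^ p * (exp (1 - t ^ m / m) * besselK α 1) := by
          unfold rescaledBesselK
          gcongr
          exact besselK_le_exp_sub_mul α one_pos hut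
      _ = exp 1 * besselK α 1 * (t ^ p * exp (-(1 / m) * t ^ m)) := by
          rw [show -(1 / m) * t ^ m = -(t ^ m / m) by ring, sub_eq_add_neg, exp_add]
          ring

lemma antitoneOn_rescaledBesselK (hm : 0 < m) {p α : ℝ} (hp : p = m * α) :
    AntitoneOn (rescaledBesselK m p α) (Ioi 0) := by
  have hd := fun t (ht : t ∈ Ioi (0 : ℝ)) => hasDerivAt_rescaledBesselK hm hp ht
  refine antitoneOn_of_deriv_nonpos (convex_Ioi 0)
    (fun t ht => (hd t ht).continuousAt.continuousWithinAt)
    (fun t ht => (hd t (interior_subset ht)).differentiableAt.differentiableWithinAt)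
    fun t ht => ?_
  rw [interior_Ioi] at ht
  rw [(hd t ht).deriv, neg_nonpos]
  exact (rescaledBesselK_pos hm _ _ ht).le

lemma exists_bounds_rescaledBesselK_div (hm : 0 < m) {ν t₀ : ℝ} (hν₀ : 0 ≤ ν)
    (hν : ν ≤ 1 / 2) (ht₀ : 0 < t₀) (p q : ℝ) :
    ∃ C : ℝ, 1 < C ∧ ∀ t ≥ t₀,
      1 / C ≤ rescaledBesselK m (p + q) (1 - ν) t / (rescaledBesselK m p ν t * t ^ q) ∧
      rescaledBesselK m (p + q) (1 - ν) t / (rescaledBesselK m p ν t * t ^ q) ≤ C := by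
  have hu₀ : 0 < t₀ ^ m / m := by positivity
  have hC : 0 < 1 / (t₀ ^ m / m) := one_div_pos.2 hu₀
  refine ⟨2 + 1 / (t₀ ^ m / m), by linarith, fun t ht => ?_⟩
  have ht' : 0 < t := ht₀.trans_le ht
  have hu : t₀ ^ m / m ≤ t ^ m / m := by gcongr
  have hratio : rescaledBesselK m (p + q) (1 - ν) t / (rescaledBesselK m p ν t * t ^ q)
      = besselK (1 - ν) (t ^ m / m) / besselK ν (t ^ m / m) := by
    have := rpow_pos_of_pos ht' p
    have := rpow_pos_of_pos ht' q
    rw [rescaledBesselK, rescaledBesselK, rpow_add ht']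
    field_simp
  obtain ⟨hlo, hhi⟩ := besselK_one_sub_div_besselK_mem_Icc hν₀ hν (hu₀.trans_le hu)
  rw [hratio]
  refine ⟨((div_le_one (by positivity)).2 (by linarith)).trans hlo, hhi.trans ?_⟩
  gcongr

end Rescaled

/-- Properties of `λ(t) = C_ℓ t^{1/2} K_{1/(2ℓ+2)}(t^{ℓ+1}/(ℓ+1))`: `λ` and `-λ'`
are positive and decreasing on `[t₀,∞)`, `λ(t), λ'(t) → 0` as `t → ∞`, and
`-λ'(t)/(λ(t) t^ℓ)` is bounded between `1/C` and `C` for some `C > 1`. -/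
theorem stmt_12 (ℓ t₀ Cℓ : ℝ) (hℓ : 0 ≤ ℓ) (ht₀ : 0 < t₀)
    (lam : ℝ → ℝ)
    (hlam : ∀ t, lam t =
      Cℓ * t ^ ((1 : ℝ) / 2) * besselK (1 / (2 * ℓ + 2)) (t ^ (ℓ + 1) / (ℓ + 1)))
    (hnorm : lam t₀ = 1) :
    (∀ t ≥ t₀, 0 < lam t) ∧ AntitoneOn lam (Set.Ici t₀) ∧
    (∀ t ≥ t₀, 0 < -deriv lam t) ∧ AntitoneOn (fun t => -deriv lam t) (Set.Ici t₀) ∧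
    Tendsto lam atTop (nhds 0) ∧ Tendsto (deriv lam) atTop (nhds 0) ∧
    ∃ C : ℝ, 1 < C ∧ ∀ t ≥ t₀,
      1 / C ≤ -deriv lam t / (lam t * t ^ ℓ) ∧
      -deriv lam t / (lam t * t ^ ℓ) ≤ C := by
  have hm : 0 < ℓ + 1 := by linarith
  set ν := 1 / (2 * ℓ + 2) with hν
  have hp₁ : (1 : ℝ) / 2 = (ℓ + 1) * ν := by rw [hν]; field_simp
  have hp₂ : 1 / 2 + ℓ = (ℓ + 1) * (1 - ν) := by rw [hν]; field_simp; ring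
  have hlam_eq : lam = fun t => Cℓ * rescaledBesselK (ℓ + 1) (1 / 2) ν t :=
    funext fun t => by rw [hlam, rescaledBesselK, mul_assoc]
  have hC : 0 < Cℓ := by
    have := rescaledBesselK_pos hm (1 / 2) ν ht₀
    rw [hlam_eq] at hnorm
    nlinarith
  have hderiv : ∀ t, 0 < t →
      Cℓ * rescaledBesselK (ℓ + 1) (1 / 2 + ℓ) (1 - ν) t = -deriv lam t := by
    intro t ht
    rw [hlam_eq, ((hasDerivAt_rescaledBesselK hm hp₁ ht).const_mul Cℓ).deriv,
      add_sub_cancel_right]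
    ring
  have hsub : Ici t₀ ⊆ Ioi 0 := Ici_subset_Ioi.2 ht₀
  obtain ⟨C, hC₁, hbounds⟩ := exists_bounds_rescaledBesselK_div (ν := ν) hm (by positivity)
    (one_div_le_one_div_of_le two_pos (by linarith)) ht₀ (1 / 2) ℓ
  refine ⟨fun t ht => ?_, ?_, fun t ht => ?_, ?_, ?_, ?_, C, hC₁, fun t ht => ?_⟩
  · rw [hlam_eq]
    exact mul_pos hC (rescaledBesselK_pos hm _ _ (hsub ht))
  · rw [hlam_eq]
    exact fun a ha b hb hab => mul_le_mul_of_nonneg_left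
      (antitoneOn_rescaledBesselK hm hp₁ (hsub ha) (hsub hb) hab) hC.le
  · rw [← hderiv t (hsub ht)]
    exact mul_pos hC (rescaledBesselK_pos hm _ _ (hsub ht))
  · refine AntitoneOn.congr (fun a ha b hb hab => mul_le_mul_of_nonneg_left
      (antitoneOn_rescaledBesselK hm hp₂ (hsub ha) (hsub hb) hab) hC.le)
      fun t ht => hderiv t (hsub ht)
  · rw [hlam_eq]
    simpa using (tendsto_rescaledBesselK_atTop hm (1 / 2) ν).const_mul Cℓ
  · have := ((tendsto_rescaledBesselK_atTop hm (1 / 2 + ℓ) (1 - ν)).const_mul Cℓ).neg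
    rw [mul_zero, neg_zero] at this
    exact this.congr' (eventuallyEq_of_mem (Ioi_mem_atTop 0)
      fun t ht => by rw [hderiv t ht, neg_neg])
  · rw [← hderiv t (hsub ht), hlam_eq, mul_assoc, mul_div_mul_left _ _ hC.ne']
    exact hbounds t ht
end

section
/- Let u(s,x) solve ∂_s²u - Δu + (μ/(1+s))∂_su = |u|^p with 1 < μ ≤ 2. Set ℓ = (2-μ)/(μ-1), Λ(t) = (1+t)^{ℓ+1}/(ℓ+1), and w(t,x) = (1+t) u(Λ(t)-1, x). Then w satisfies ∂_t²w - (1+t)^{2ℓ} Δw = (1+t)^{2ℓ-(p-1)} |w|^p. -/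
/-- The Laplacian of `f : ℝⁿ → ℝ`, as the sum of the second partial derivatives
in the coordinate directions. -/
noncomputable def laplacian {n : ℕ} (f : EuclideanSpace ℝ (Fin n) → ℝ)
    (x : EuclideanSpace ℝ (Fin n)) : ℝ :=
  ∑ i : Fin n,
    fderiv ℝ (fun y => fderiv ℝ f y (EuclideanSpace.single i 1)) x
      (EuclideanSpace.single i 1)

/-!
With `a = 1 + t` and `s = Λ(t) - 1`, so that `ds/dt = a^ℓ`, the chain rule gives
`∂_t²w = (ℓ + 2) a^ℓ ∂_s u + a^(2ℓ+1) ∂_s²u`. Since `ℓ + 1 = 1/(μ - 1)`, we have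
`μ (ℓ + 1) = ℓ + 2`, and `1 + s = a^(ℓ+1)/(ℓ+1)`, so the damping term of the equation for `u`,
multiplied by `a^(2ℓ+1)`, is exactly `(ℓ + 2) a^ℓ ∂_s u` and cancels the first-order term.
What remains is `a^(2ℓ+1) (Δu + |u|^p)`, which is `a^(2ℓ) Δw + a^(2ℓ-(p-1)) |w|^p`.
The threshold `t₀ = (μ-1)^(1-μ) - 1` is the time at which `Λ(t₀) = 1`, i.e. `s = 0`.
-/

open Real

theorem laplacian_const_mul {n : ℕ} (c : ℝ) (f : EuclideanSpace ℝ (Fin n) → ℝ)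
    (x : EuclideanSpace ℝ (Fin n)) :
    laplacian (fun y => c * f y) x = c * laplacian f x := by
  have hf : (fun y => c * f y) = c • f := rfl
  simp only [laplacian, Finset.mul_sum, hf, fderiv_const_smul_field, Pi.smul_apply,
    smul_apply, smul_eq_mul]
  refine Finset.sum_congr rfl fun i _ => ?_
  have hf' : (fun y => c * fderiv ℝ f y (EuclideanSpace.single i 1)) =
      c • fun y => fderiv ℝ f y (EuclideanSpace.single i 1) := rfl
  rw [hf', fderiv_const_smul_field]
  rfl

section
variable {U g : ℝ → ℝ} {ℓ : ℝ}

theorem hasDerivAt_one_add_mul_comp (hU : Differentiable ℝ U)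
    (hg : ∀ t, HasDerivAt g ((1 + t) ^ ℓ) t) (t : ℝ) :
    HasDerivAt (fun t => (1 + t) * U (g t))
      (U (g t) + (1 + t) * ((1 + t) ^ ℓ * deriv U (g t))) t := by
  have h := ((hasDerivAt_id t).const_add 1).mul ((hU (g t)).hasDerivAt.comp t (hg t))
  refine h.congr_deriv ?_
  simp only [Function.comp, id]
  ring

theorem deriv_deriv_one_add_mul_comp (hU : ContDiff ℝ 2 U)
    (hg : ∀ t, HasDerivAt g ((1 + t) ^ ℓ) t) {t : ℝ} (ht : 0 < 1 + t) :
    deriv (deriv fun t => (1 + t) * U (g t)) t =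
      (ℓ + 2) * (1 + t) ^ ℓ * deriv U (g t) +
        (1 + t) ^ (2 * ℓ + 1) * deriv (deriv U) (g t) := by
  have hU1 : Differentiable ℝ U := hU.differentiable (by norm_num)
  have hU2 : Differentiable ℝ (deriv U) :=
    (hU.iterate_deriv' 1 1).differentiable (by norm_num)
  rw [funext fun s => (hasDerivAt_one_add_mul_comp hU1 hg s).deriv]
  have h1 : HasDerivAt (fun s : ℝ => 1 + s) 1 t := (hasDerivAt_id t).const_add 1
  have h := ((hU1 (g t)).hasDerivAt.comp t (hg t)).add (h1.mul
    ((h1.rpow_const (p := ℓ) (Or.inl ht.ne')).mul ((hU2 (g t)).hasDerivAt.comp t (hg t))))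
  refine HasDerivAt.deriv (h.congr_deriv ?_)
  have e1 : (1 + t) * (1 + t) ^ (ℓ - 1) = (1 + t) ^ ℓ := by
    rw [mul_comm, ← rpow_add_one ht.ne', sub_add_cancel]
  have e2 : (1 + t) * ((1 + t) ^ ℓ * (1 + t) ^ ℓ) = (1 + t) ^ (2 * ℓ + 1) := by
    rw [← rpow_add ht, mul_comm, ← rpow_add_one ht.ne', two_mul]
  simp only [Function.comp, Pi.mul_apply, one_mul]
  linear_combination (deriv U (g t) * ℓ) * e1 + deriv (deriv U) (g t) * e2
end

theorem hasDerivAt_one_add_rpow_add_one_div {ℓ : ℝ} (hℓ : 0 ≤ ℓ) (t : ℝ) :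
    HasDerivAt (fun t => (1 + t) ^ (ℓ + 1) / (ℓ + 1)) ((1 + t) ^ ℓ) t := by
  have h := (((hasDerivAt_id t).const_add 1).rpow_const (p := ℓ + 1)
    (Or.inr (by linarith))).div_const (ℓ + 1)
  refine h.congr_deriv ?_
  simp only [id, add_sub_cancel_right]
  field_simp

theorem one_le_rpow_div_self {q a : ℝ} (hq : 0 < q) (ha : q ^ q⁻¹ ≤ a) : 1 ≤ a ^ q / q := by
  have h : q ≤ a ^ q := by
    calc q = (q ^ q⁻¹) ^ q := by rw [← rpow_mul hq.le, inv_mul_cancel₀ hq.ne', rpow_one]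
      _ ≤ a ^ q := rpow_le_rpow (by positivity) ha hq.le
  rwa [one_le_div hq]

theorem one_le_rpow_div_of_sub_one_rpow_le {μ ℓ a : ℝ} (hμ : 1 < μ) (hℓ : ℓ + 1 = (μ - 1)⁻¹)
    (ha : (μ - 1) ^ (1 - μ) ≤ a) : 1 ≤ a ^ (ℓ + 1) / (ℓ + 1) := by
  have hμ' : 0 < μ - 1 := by linarith
  refine one_le_rpow_div_self (by rw [hℓ]; positivity) ?_
  rwa [hℓ, inv_inv, inv_rpow hμ'.le, ← rpow_neg hμ'.le, neg_sub]

theorem div_rpow_div_mul_rpow_eq {μ ℓ a : ℝ} (ha : 0 < a) (hμℓ : μ * (ℓ + 1) = ℓ + 2) :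
    μ / (a ^ (ℓ + 1) / (ℓ + 1)) * a ^ (2 * ℓ + 1) = (ℓ + 2) * a ^ ℓ := by
  rw [show 2 * ℓ + 1 = ℓ + (ℓ + 1) by ring, rpow_add ha ℓ (ℓ + 1)]
  field_simp
  linarith

theorem stmt_15_general (n : ℕ) (μ p : ℝ) (hμ1 : 1 < μ) (hμ2 : μ ≤ 2)
    (u : ℝ → EuclideanSpace ℝ (Fin n) → ℝ)
    (hureg : ∀ x, ContDiff ℝ 2 (fun s => u s x))
    (hu : ∀ s ≥ (0 : ℝ), ∀ x,
      deriv (deriv (fun s' => u s' x)) s - laplacian (u s) x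
        + μ / (1 + s) * deriv (fun s' => u s' x) s = |u s x| ^ p)
    (ℓ : ℝ) (hℓ : ℓ = (2 - μ) / (μ - 1))
    (Λ : ℝ → ℝ) (hΛ : ∀ t, Λ t = (1 + t) ^ (ℓ + 1) / (ℓ + 1))
    (w : ℝ → EuclideanSpace ℝ (Fin n) → ℝ)
    (hw : ∀ t x, w t x = (1 + t) * u (Λ t - 1) x) :
    ∀ t ≥ (μ - 1) ^ (1 - μ) - 1, ∀ x,
      deriv (deriv (fun t' => w t' x)) t - (1 + t) ^ (2 * ℓ) * laplacian (w t) x =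
        (1 + t) ^ (2 * ℓ - (p - 1)) * |w t x| ^ p := by
  intro t ht x
  have hμ : 0 < μ - 1 := by linarith
  have hℓ0 : 0 ≤ ℓ := hℓ ▸ div_nonneg (by linarith) hμ.le
  have hq : ℓ + 1 = (μ - 1)⁻¹ := by rw [hℓ]; field_simp; ring
  have hμq : μ * (ℓ + 1) = ℓ + 2 := by rw [hℓ]; field_simp; ring
  have ha : 0 < 1 + t := by linarith [rpow_pos_of_pos hμ (1 - μ)]
  have hs : 0 ≤ Λ t - 1 := by
    rw [hΛ, sub_nonneg]
    exact one_le_rpow_div_of_sub_one_rpow_le hμ1 hq (by linarith)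
  have hg : ∀ t, HasDerivAt (fun t => Λ t - 1) ((1 + t) ^ ℓ) t := fun t => by
    simpa only [hΛ] using (hasDerivAt_one_add_rpow_add_one_div hℓ0 t).sub_const 1
  have hww : deriv (deriv fun t' => w t' x) t =
      (ℓ + 2) * (1 + t) ^ ℓ * deriv (fun s => u s x) (Λ t - 1) +
        (1 + t) ^ (2 * ℓ + 1) * deriv (deriv fun s => u s x) (Λ t - 1) := by
    simp only [hw]
    exact deriv_deriv_one_add_mul_comp (hureg x) hg ha
  have hΔw : laplacian (w t) x = (1 + t) * laplacian (u (Λ t - 1)) x := by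
    rw [show w t = fun y => (1 + t) * u (Λ t - 1) y from funext (hw t), laplacian_const_mul]
  have hwp : |w t x| ^ p = (1 + t) ^ p * |u (Λ t - 1) x| ^ p := by
    rw [hw, abs_mul, abs_of_pos ha, mul_rpow ha.le (abs_nonneg _)]
  have hdamping : μ / (1 + (Λ t - 1)) * (1 + t) ^ (2 * ℓ + 1) = (ℓ + 2) * (1 + t) ^ ℓ := by
    rw [add_sub_cancel, hΛ]
    exact div_rpow_div_mul_rpow_eq ha hμq
  have hpow₁ : (1 + t) ^ (2 * ℓ) * (1 + t) = (1 + t) ^ (2 * ℓ + 1) := (rpow_add_one ha.ne' _).symm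
  have hpow₂ : (1 + t) ^ (2 * ℓ - (p - 1)) * (1 + t) ^ p = (1 + t) ^ (2 * ℓ + 1) := by
    rw [← rpow_add ha]; ring_nf
  rw [hww, hΔw, hwp]
  linear_combination (1 + t) ^ (2 * ℓ + 1) * hu _ hs x
    - deriv (fun s => u s x) (Λ t - 1) * hdamping
    - laplacian (u (Λ t - 1)) x * hpow₁ - |u (Λ t - 1) x| ^ p * hpow₂

/-- Liouville transformation, case `1 < μ ≤ 2`: if `u` solves
`∂_s²u - Δu + (μ/(1+s))∂_su = |u|^p` on `[0,∞)×ℝⁿ`, then with `ℓ = (2-μ)/(μ-1)`,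
`Λ(t) = (1+t)^{ℓ+1}/(ℓ+1)` and `w(t,x) = (1+t)u(Λ(t)-1,x)`, the function `w`
solves `∂_t²w - (1+t)^{2ℓ}Δw = (1+t)^{2ℓ-(p-1)}|w|^p` for
`t ≥ t₀ = (μ-1)^{1-μ} - 1`. -/
theorem stmt_15 (n : ℕ) (hn : 2 ≤ n) (μ p : ℝ) (hμ1 : 1 < μ) (hμ2 : μ ≤ 2)
    (hp : 1 < p)
    (u : ℝ → EuclideanSpace ℝ (Fin n) → ℝ)
    (hureg : ∀ x, ContDiff ℝ 2 (fun s => u s x))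
    (hu : ∀ s ≥ (0 : ℝ), ∀ x,
      deriv (deriv (fun s' => u s' x)) s - laplacian (u s) x
        + μ / (1 + s) * deriv (fun s' => u s' x) s = |u s x| ^ p)
    (ℓ : ℝ) (hℓ : ℓ = (2 - μ) / (μ - 1))
    (Λ : ℝ → ℝ) (hΛ : ∀ t, Λ t = (1 + t) ^ (ℓ + 1) / (ℓ + 1))
    (w : ℝ → EuclideanSpace ℝ (Fin n) → ℝ)
    (hw : ∀ t x, w t x = (1 + t) * u (Λ t - 1) x) :
    ∀ t ≥ (μ - 1) ^ (1 - μ) - 1, ∀ x,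
      deriv (deriv (fun t' => w t' x)) t - (1 + t) ^ (2 * ℓ) * laplacian (w t) x =
        (1 + t) ^ (2 * ℓ - (p - 1)) * |w t x| ^ p :=
  stmt_15_general n μ p hμ1 hμ2 u hureg hu ℓ hℓ Λ hΛ w hw
end
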